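/- Let G be a simple graph with distinct vertices s, t at distance d, such that every vertex of G lies on some shortest s-t path and no edge of G joins two vertices in the same layer. Let G' be obtained from G by adding four new vertices s_1, s_2, t_1, t_2 and four new edges s_2s_1, s_1s, tt_1, t_1t_2. Let V_s and V_t be vertex sets of shortest s-t paths in G, and let V'_s = V_s ∪ {s_1, s_2, t_1, t_2} and V'_t = V_t ∪ {s_1, s_2, t_1, t_2}. Then there is a sequence of TJ steps transforming V_s into V_t in which every intermediate vertex subset is the vertex set of a shortest s-t path in G, if and only if there is a sequence of TJ steps transforming V'_s into V'_t in which every intermediate vertex subset induces a path in G'. -/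

import Mathlib

namespace Stmt16

/-- The vertex type of `G'`: the vertices of `G` plus four new vertices;
`Sum.inr 0 = s_1`, `Sum.inr 1 = s_2`, `Sum.inr 2 = t_1`, `Sum.inr 3 = t_2`. -/
abbrev Wt (V : Type*) := V ⊕ Fin 4

variable {V : Type*}

/-- `v` lies on some shortest `s`-`t` path of `G`. -/
def OnShortest (G : SimpleGraph V) (s t v : V) : Prop :=
  G.dist s v + G.dist v t = G.dist s t

/-- The graph `G'`, obtained from `G` by adding the new vertices `s_1, s_2, t_1, t_2`
and the new edges `s_2s_1`, `s_1s`, `tt_1`, `t_1t_2`. -/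
def newG (G : SimpleGraph V) (s t : V) : SimpleGraph (Wt V) :=
  SimpleGraph.fromEdgeSet
    (Sym2.map Sum.inl '' G.edgeSet ∪
      {s(Sum.inr 1, Sum.inr 0), s(Sum.inr 0, Sum.inl s),
       s(Sum.inl t, Sum.inr 2), s(Sum.inr 2, Sum.inr 3)})

/-- `U` is the vertex set of a shortest `s`-`t` path of `G`. -/
def ShortestPathSet (G : SimpleGraph V) (s t : V) (U : Set V) : Prop :=
  ∃ p : G.Walk s t, p.IsPath ∧ p.length = G.dist s t ∧ U = {v | v ∈ p.support}

/-- A graph is a (simple) path: a tree with exactly two vertices of degree one in which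
every other vertex has degree two. -/
def IsPathGraph {α : Type*} (H : SimpleGraph α) : Prop :=
  H.Connected ∧ H.IsAcyclic ∧
    {v | (H.neighborSet v).ncard = 1}.ncard = 2 ∧
    ∀ v, (H.neighborSet v).ncard = 1 ∨ (H.neighborSet v).ncard = 2

/-- A single token-jumping (TJ) step on vertex subsets. -/
def TJStepV {α : Type*} (V1 V2 : Set α) : Prop :=
  ∃ u v, u ∈ V1 ∧ v ∉ V1 ∧ V2 = (V1 \ {u}) ∪ {v}

/-- There is a sequence of TJ steps from `Ws` to `Wt` in which every vertex subset
satisfies the property `P`. -/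
def TJReachV {α : Type*} (P : Set α → Prop) (Ws Wt : Set α) : Prop :=
  ∃ (l : ℕ) (f : ℕ → Set α), f 0 = Ws ∧ f l = Wt ∧
    (∀ k ≤ l, P (f k)) ∧ ∀ k < l, TJStepV (f k) (f (k + 1))

/-!
A shortest `s`-`t` path of `G` is chordless, so together with the pendant paths `s_2 s_1 s` and
`t t_1 t_2` it is an induced path of `G'`; hence TJ sequences of shortest paths map to TJ
sequences of induced paths. Conversely, let a TJ step move a token of
`V'_U = U ∪ {s_1, s_2, t_1, t_2}`, for a shortest path `U`, and produce an induced path `B`. The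
token cannot leave `s_2` or `t_2`: its new vertex would be adjacent to an inner vertex of the
path, which would get degree three. It cannot leave `s_1`, `s`, `t_1` or `t` either, since that
separates `s_2` or `t_2` from the rest. So it moves from some `u ∈ U \ {s, t}` to a vertex `v` of
`G`, and `B = V'_W` with `W = U - u + v`. The `s`-`t` path in `B` cannot enter the pendant
vertices, so it is a path of `G` inside `W`; as `|W| = d + 1`, it is a shortest path with vertex
set `W`.
-/

open Sum SimpleGraph

section General

variable {α β : Type*} {H : SimpleGraph α} {H' : SimpleGraph β}

/-- In a cycle, the vertex with the largest index would have two distinct neighbours, both with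
index one less. -/
lemma isAcyclic_pathGraph (n : ℕ) : (pathGraph n).IsAcyclic := by
  intro v c hc
  obtain ⟨x, hx, hmax⟩ := c.support.toFinset.exists_max_image Fin.val ⟨v, by simp⟩
  rw [List.mem_toFinset] at hx
  set c' := c.rotate x hx
  have hc' : c'.IsCycle := hc.rotate hx
  have hpred : ∀ i, (pathGraph n).Adj x (c'.getVert i) → (c'.getVert i).val + 1 = x.val := by
    intro i hxy
    have := hmax _ <| List.mem_toFinset.mpr <|
      (c.mem_support_rotate_iff x hx).mp (c'.getVert_mem_support i)
    rw [pathGraph_adj] at hxy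
    omega
  refine hc'.snd_ne_penultimate (Fin.ext ?_)
  have h1 := hpred 1 (c'.adj_snd hc'.not_nil)
  have h2 := hpred (c'.length - 1) (c'.adj_penultimate hc'.not_nil).symm
  simp only [Walk.snd, Walk.penultimate] at *
  omega

lemma IsPathGraph.of_iso (e : H ≃g H') (hH : IsPathGraph H) : IsPathGraph H' := by
  have hdeg : ∀ x, (H'.neighborSet (e x)).ncard = (H.neighborSet x).ncard := fun x => by
    rw [← Set.ncard_image_of_injective _ e.injective]
    congr 1
    ext y
    obtain ⟨y, rfl⟩ := e.surjective y
    simp [e.map_adj_iff]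
  obtain ⟨hconn, hacyc, hends, hdeg12⟩ := hH
  refine ⟨e.connected_iff.mp hconn, e.isAcyclic_iff.mp hacyc, ?_, fun y => ?_⟩
  · rw [← hends, ← Set.ncard_image_of_injective _ e.injective]
    congr 1
    ext y
    obtain ⟨y, rfl⟩ := e.surjective y
    simp only [Set.mem_ofPred_eq, Set.mem_image, e.injective.eq_iff, exists_eq_right, hdeg]
  · obtain ⟨x, rfl⟩ := e.surjective y
    rw [hdeg]
    exact hdeg12 x

lemma IsPathGraph.exists_adj (hH : IsPathGraph H) (x : α) : ∃ y, H.Adj x y :=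
  Set.nonempty_of_ncard_ne_zero (s := H.neighborSet x) (by rcases hH.2.2.2 x with h | h <;> omega)

lemma IsPathGraph.eq_or_eq_of_adj (hH : IsPathGraph H) {x a b c : α} (ha : H.Adj x a)
    (hb : H.Adj x b) (hab : a ≠ b) (hc : H.Adj x c) : c = a ∨ c = b := by
  by_contra! hne
  have hfin : (H.neighborSet x).Finite :=
    Set.finite_of_ncard_ne_zero (by rcases hH.2.2.2 x with h | h <;> omega)
  have hsub : {a, b, c} ⊆ H.neighborSet x := by
    rintro y (rfl | rfl | rfl) <;> assumption
  have h3 := Set.ncard_le_ncard hsub hfin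
  rw [Set.ncard_eq_three.mpr ⟨a, b, c, hab, hne.1.symm, hne.2.symm, rfl⟩] at h3
  rcases hH.2.2.2 x with h | h <;> omega

lemma not_preconnected_induce_of_pendant {B : Set α} {a b c z : α}
    (ha : ∀ y, H.Adj a y → y = b) (hb : ∀ y, H.Adj b y → y = a ∨ y = c)
    (hcut : b ∉ B ∨ c ∉ B) (haB : a ∈ B) (hzB : z ∈ B) (hza : z ≠ a) (hzb : z ≠ b) :
    ¬ (H.induce B).Preconnected := by
  intro hconn
  obtain ⟨w⟩ := hconn ⟨a, haB⟩ ⟨z, hzB⟩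
  suffices ∀ {x y : B} (w : (H.induce B).Walk x y), (x : α) = a ∨ (x : α) = b →
      (y : α) = a ∨ (y : α) = b by
    rcases this w (Or.inl rfl) with h | h
    exacts [hza h, hzb h]
  intro x y w
  induction w with
  | nil => exact id
  | @cons x y _ hxy _ ih =>
    rintro (hx | hx)
    · exact ih (Or.inr (ha _ (hx ▸ hxy)))
    · rcases hb y (hx ▸ hxy : H.Adj b y) with hya | hyc
      · exact ih (Or.inl hya)
      · rcases hcut with h | h
        exacts [(h (hx ▸ x.2)).elim, (h (hyc ▸ y.2)).elim]

end General

section Walks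

variable {α β : Type*} {H : SimpleGraph α} {u v : α} {p : H.Walk u v}

lemma _root_.SimpleGraph.Walk.IsPath.ncard_neighborSet_toSubgraph [DecidableEq α]
    (hp : p.IsPath) (hnil : ¬ p.Nil) {x : α} (hx : x ∈ p.support) :
    (p.toSubgraph.neighborSet x).ncard = if x = u ∨ x = v then 1 else 2 := by
  obtain ⟨i, rfl, hi⟩ := Walk.mem_support_iff_exists_getVert.mp hx
  have hinj := hp.getVert_injOn
  by_cases h0 : i = 0
  · subst h0
    simp [hp.neighborSet_toSubgraph_startpoint hnil]
  by_cases hl : i = p.length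
  · subst hl
    simp [hp.neighborSet_toSubgraph_endpoint hnil]
  have hu : p.getVert i ≠ u := fun h =>
    h0 (hinj (show i ≤ p.length by omega) (by simp) (h.trans p.getVert_zero.symm))
  have hv : p.getVert i ≠ v := fun h =>
    hl (hinj (show i ≤ p.length by omega) (by simp) (h.trans p.getVert_length.symm))
  simp [hu, hv, hp.ncard_neighborSet_toSubgraph_internal_eq_two h0 (by omega)]

lemma _root_.SimpleGraph.Walk.IsPath.isPathGraph_toSubgraph (hp : p.IsPath) (hnil : ¬ p.Nil) :
    IsPathGraph p.toSubgraph.coe := by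
  classical
  have huv : u ≠ v := fun h => hnil ((hp.nil_iff_eq).mpr h)
  have hdeg : ∀ x : p.toSubgraph.verts, (p.toSubgraph.coe.neighborSet x).ncard =
      if (x : α) = u ∨ (x : α) = v then 1 else 2 := fun x => by
    rw [← Nat.card_coe_set_eq, Nat.card_congr (Subgraph.coeNeighborSetEquiv x),
      Nat.card_coe_set_eq]
    exact hp.ncard_neighborSet_toSubgraph hnil (p.mem_verts_toSubgraph.mp x.2)
  refine ⟨p.toSubgraph_connected.coe,
    hp.pathGraphIsoToSubgraph.isAcyclic_iff.mp (isAcyclic_pathGraph _), ?_, fun x => ?_⟩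
  · have : {x : p.toSubgraph.verts | (p.toSubgraph.coe.neighborSet x).ncard = 1} =
        {⟨u, p.start_mem_verts_toSubgraph⟩, ⟨v, p.end_mem_verts_toSubgraph⟩} := by
      ext x
      simp [hdeg, Subtype.ext_iff, or_iff_not_imp_left]
    rw [this, Set.ncard_pair (by simpa [Subtype.ext_iff] using huv)]
  · rw [hdeg]
    split_ifs <;> simp

lemma _root_.SimpleGraph.Walk.IsPath.isPathGraph_induce_support (hp : p.IsPath)
    (hc : p.IsChordless) (hnil : ¬ p.Nil) : IsPathGraph (H.induce {x | x ∈ p.support}) := by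
  refine (hp.isPathGraph_toSubgraph hnil).of_iso ⟨Equiv.setCongr p.verts_toSubgraph, ?_⟩
  exact (Walk.isInduced_toSubgraph.mpr hc).adj.symm

lemma _root_.SimpleGraph.Walk.dist_getVert_of_length_eq_dist (hp : p.length = H.dist u v)
    {i : ℕ} (hi : i ≤ p.length) : H.dist u (p.getVert i) = i := by
  rw [← length_eq_dist_of_subwalk hp (p.isSubwalk_take i), Walk.take_length]
  omega

/-- A chord would join two vertices whose distances from `u` differ by at least two. -/
lemma _root_.SimpleGraph.Walk.isChordless_of_length_eq_dist (hp : p.length = H.dist u v) :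
    p.IsChordless := by
  rw [Walk.isChordless_iff_forall_mem_edges]
  intro a b ha hb hab
  obtain ⟨i, rfl, hi⟩ := Walk.mem_support_iff_exists_getVert.mp ha
  obtain ⟨j, rfl, hj⟩ := Walk.mem_support_iff_exists_getVert.mp hb
  have hdi := p.dist_getVert_of_length_eq_dist hp hi
  have hdj := p.dist_getVert_of_length_eq_dist hp hj
  have hji := hab.reachable.dist_triangle_right u
  have hij := hab.symm.reachable.dist_triangle_right u
  rw [dist_eq_one_iff_adj.mpr hab] at hji
  rw [dist_eq_one_iff_adj.mpr hab.symm] at hij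
  have hne : i ≠ j := fun h => hab.ne (by rw [h])
  rw [Walk.mk_mem_edges_iff_exists]
  rcases (by omega : j = i + 1 ∨ i = j + 1) with rfl | rfl
  · exact ⟨i, by omega, rfl⟩
  · exact ⟨j, by omega, Sym2.eq_swap⟩

lemma _root_.SimpleGraph.Walk.IsPath.exists_adj_adj_of_mem_support (hp : p.IsPath) {x : α}
    (hx : x ∈ p.support) (hxu : x ≠ u) (hxv : x ≠ v) :
    ∃ a ∈ p.support, ∃ b ∈ p.support, a ≠ b ∧ H.Adj x a ∧ H.Adj x b := by
  obtain ⟨i, rfl, hi⟩ := Walk.mem_support_iff_exists_getVert.mp hx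
  have hi0 : i ≠ 0 := by rintro rfl; exact hxu p.getVert_zero
  have hil : i ≠ p.length := by rintro rfl; exact hxv p.getVert_length
  refine ⟨p.getVert (i - 1), p.getVert_mem_support _, p.getVert (i + 1), p.getVert_mem_support _,
    fun h => ?_, ?_, p.adj_getVert_succ (by omega)⟩
  · have := hp.getVert_injOn (show i - 1 ≤ p.length by omega) (show i + 1 ≤ p.length by omega) h
    omega
  · simpa [Nat.sub_add_cancel (Nat.pos_of_ne_zero hi0)] using
      (p.adj_getVert_succ (i := i - 1) (by omega)).symm

lemma _root_.SimpleGraph.Walk.IsPath.notMem_support_of_forall_adj_eq (hp : p.IsPath)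
    {x r : α} (hxu : x ≠ u) (hxv : x ≠ v) (h : ∀ y ∈ p.support, H.Adj x y → y = r) :
    x ∉ p.support := by
  intro hx
  obtain ⟨a, ha, b, hb, hab, hxa, hxb⟩ := hp.exists_adj_adj_of_mem_support hx hxu hxv
  exact hab ((h a ha hxa).trans (h b hb hxb).symm)

lemma _root_.SimpleGraph.Walk.IsPath.ncard_support (hp : p.IsPath) :
    {x | x ∈ p.support}.ncard = p.length + 1 := by
  classical
  rw [← List.coe_toFinset, Set.ncard_coe_finset, List.toFinset_card_of_nodup hp.support_nodup,
    Walk.length_support]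

lemma _root_.SimpleGraph.Walk.exists_support_map_eq {G : SimpleGraph β} (f : G ↪g H) {x y : α}
    (p : H.Walk x y) {a b : β} (ha : f a = x) (hb : f b = y)
    (hp : ∀ z ∈ p.support, z ∈ Set.range f) :
    ∃ q : G.Walk a b, q.support.map f = p.support := by
  induction p generalizing a with
  | nil =>
    obtain rfl := f.injective (ha.trans hb.symm)
    exact ⟨.nil, by simp [ha]⟩
  | @cons x z y hxz p ih =>
    obtain ⟨c, rfl⟩ := hp z (by simp)
    obtain ⟨q, hq⟩ := ih rfl hb (fun z hz => hp z (by simp [hz]))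
    subst ha
    exact ⟨.cons (f.map_adj_iff.mp hxz) q, by simp [hq]⟩

end Walks

section TokenJumping

variable {α β : Type*} {P : Set α → Prop} {Q : Set β → Prop} {A B C : Set α}

lemma TJReachV.refl (hA : P A) : TJReachV P A A :=
  ⟨0, fun _ => A, rfl, rfl, fun _ _ => hA, fun _ h => absurd h (Nat.not_lt_zero _)⟩

lemma TJReachV.head (hA : P A) (hAB : TJStepV A B) (hBC : TJReachV P B C) :
    TJReachV P A C := by
  obtain ⟨l, f, hf0, hfl, hP, hstep⟩ := hBC
  refine ⟨l + 1, fun k => if k = 0 then A else f (k - 1), rfl, by simpa using hfl,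
    fun k _ => ?_, fun k hk => ?_⟩
  · rcases k with _ | k
    exacts [hA, hP k (by omega)]
  · rcases k with _ | k
    · simpa [hf0] using hAB
    · simpa using hstep k (by omega)

lemma TJReachV.map (E : Set α → Set β) (hPQ : ∀ U, P U → Q (E U))
    (hE : ∀ U W, TJStepV U W → TJStepV (E U) (E W)) (h : TJReachV P A C) :
    TJReachV Q (E A) (E C) := by
  obtain ⟨l, f, hf0, hfl, hP, hstep⟩ := h
  exact ⟨l, E ∘ f, by simp [hf0], by simp [hfl], fun k hk => hPQ _ (hP k hk),
    fun k hk => hE _ _ (hstep k hk)⟩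

lemma TJReachV.of_map {E : Set α → Set β} (hE : Function.Injective E)
    (hlift : ∀ U B, P U → TJStepV (E U) B → Q B → ∃ W, P W ∧ TJStepV U W ∧ E W = B)
    (hA : P A) (h : TJReachV Q (E A) (E C)) : TJReachV P A C := by
  obtain ⟨l, f, hf0, hfl, hQ, hstep⟩ := h
  induction l generalizing A f with
  | zero => exact hE (hf0.symm.trans hfl) ▸ TJReachV.refl hA
  | succ l ih =>
    obtain ⟨W, hW, hAW, hfW⟩ := hlift A (f 1) hA (hf0 ▸ hstep 0 (by omega)) (hQ 1 (by omega))
    exact TJReachV.head hA hAW <| ih hW (fun k => f (k + 1)) hfW.symm hfl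
      (fun k hk => hQ _ (by omega)) (fun k hk => hstep _ (by omega))

end TokenJumping

section NewGraph

variable {G : SimpleGraph V} {s t : V} {U : Set V}

@[simp] lemma newG_adj_inl_inl {u v : V} : (newG G s t).Adj (inl u) (inl v) ↔ G.Adj u v := by
  simp [newG, Sym2.exists, and_or_left, exists_or, G.adj_comm v u, and_iff_left_of_imp Adj.ne]

@[simp] lemma newG_adj_inl_inr {u : V} {i : Fin 4} :
    (newG G s t).Adj (inl u) (inr i) ↔ u = s ∧ i = 0 ∨ u = t ∧ i = 2 := by
  simp [newG, Sym2.exists]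

@[simp] lemma newG_adj_inr_inr {i j : Fin 4} :
    (newG G s t).Adj (inr i) (inr j) ↔ s(i, j) = s(0, 1) ∨ s(i, j) = s(2, 3) := by
  fin_cases i <;> fin_cases j <;> simp [newG, Sym2.exists]

@[simp] lemma newG_adj_inr_inl {u : V} {i : Fin 4} :
    (newG G s t).Adj (inr i) (inl u) ↔ u = s ∧ i = 0 ∨ u = t ∧ i = 2 := by
  rw [SimpleGraph.adj_comm, newG_adj_inl_inr]

lemma newG_adj_inr_one {z : Wt V} : (newG G s t).Adj (inr 1) z ↔ z = inr 0 := by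
  cases z <;> simp

lemma newG_adj_inr_zero {z : Wt V} : (newG G s t).Adj (inr 0) z ↔ z = inr 1 ∨ z = inl s := by
  cases z <;> simp [eq_comm]

lemma newG_adj_inr_three {z : Wt V} : (newG G s t).Adj (inr 3) z ↔ z = inr 2 := by
  cases z <;> simp

lemma newG_adj_inr_two {z : Wt V} : (newG G s t).Adj (inr 2) z ↔ z = inr 3 ∨ z = inl t := by
  cases z <;> simp [eq_comm]

variable (G s t) in
@[simps!]
def inlEmbedding : G ↪g newG G s t := ⟨⟨inl, inl_injective⟩, newG_adj_inl_inl⟩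

def augment (U : Set V) : Set (Wt V) := inl '' U ∪ Set.range inr

/-- The walk `s_2 s_1 p t_1 t_2` of `G'`. -/
def extendWalk (p : G.Walk s t) : (newG G s t).Walk (inr 1) (inr 3) :=
  ((Walk.cons (v := inr 0) (by simp) (.cons (by simp) .nil) :
      (newG G s t).Walk (inr 1) ((inlEmbedding G s t).toHom s)).append
    (p.map (inlEmbedding G s t).toHom)).append
    (Walk.cons (v := inr 2) (by simp) (.cons (by simp) .nil) :
      (newG G s t).Walk ((inlEmbedding G s t).toHom t) (inr 3))

lemma support_extendWalk_eq (p : G.Walk s t) :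
    (extendWalk p).support = inr 1 :: inr 0 :: p.support.map inl ++ [inr 2, inr 3] := by
  simp [extendWalk, Walk.support_append]

lemma edges_extendWalk (p : G.Walk s t) :
    (extendWalk p).edges = s(inr 1, inr 0) :: s(inr 0, inl s) :: p.edges.map (Sym2.map inl) ++
      [s(inl t, inr 2), s(inr 2, inr 3)] := by
  simp [extendWalk, Walk.edges_append]

lemma support_extendWalk (p : G.Walk s t) :
    {x | x ∈ (extendWalk p).support} = augment {v | v ∈ p.support} := by
  ext (v | i)
  · simp [support_extendWalk_eq, augment]
  · fin_cases i <;> simp [support_extendWalk_eq, augment]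

lemma isPath_extendWalk {p : G.Walk s t} (hp : p.IsPath) : (extendWalk p).IsPath := by
  rw [Walk.isPath_def, support_extendWalk_eq]
  simp [List.nodup_append, hp.support_nodup.map inl_injective]

lemma isChordless_extendWalk {p : G.Walk s t} (hc : p.IsChordless) :
    (extendWalk p).IsChordless := by
  rw [Walk.isChordless_iff_forall_mem_edges] at hc ⊢
  simp only [support_extendWalk_eq, edges_extendWalk]
  rintro (a | i) (b | j) ha hb hab
  · simpa using ⟨s(a, b), hc (by simpa using ha) (by simpa using hb) (by simpa using hab), rfl⟩
  · rcases newG_adj_inl_inr.mp hab with ⟨rfl, rfl⟩ | ⟨rfl, rfl⟩ <;> simp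
  · rcases newG_adj_inr_inl.mp hab with ⟨rfl, rfl⟩ | ⟨rfl, rfl⟩ <;> simp
  · rcases newG_adj_inr_inr.mp hab with h | h <;>
      rcases Sym2.eq_iff.mp h with ⟨rfl, rfl⟩ | ⟨rfl, rfl⟩ <;> simp

lemma ShortestPathSet.start_mem (hU : ShortestPathSet G s t U) : s ∈ U := by
  obtain ⟨p, -, -, rfl⟩ := hU
  exact p.start_mem_support

lemma ShortestPathSet.end_mem (hU : ShortestPathSet G s t U) : t ∈ U := by
  obtain ⟨p, -, -, rfl⟩ := hU
  exact p.end_mem_support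

lemma ShortestPathSet.finite (hU : ShortestPathSet G s t U) : U.Finite := by
  obtain ⟨p, -, -, rfl⟩ := hU
  exact p.support.finite_toSet

lemma ShortestPathSet.ncard_eq (hU : ShortestPathSet G s t U) : U.ncard = G.dist s t + 1 := by
  obtain ⟨p, hp, hlen, rfl⟩ := hU
  rw [hp.ncard_support, hlen]

lemma shortestPathSet_of_walk {W : Set V} (hW : W.Finite) (hcard : W.ncard ≤ G.dist s t + 1)
    (q : G.Walk s t) (hq : ∀ x ∈ q.support, x ∈ W) : ShortestPathSet G s t W := by
  classical
  have hsub : {x | x ∈ q.bypass.support} ⊆ W := fun x hx =>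
    hq x (q.support_bypass_subset_support hx)
  have hlen := q.bypass_isPath.ncard_support
  have hle := Set.ncard_le_ncard hsub hW
  have hdist := dist_le q.bypass
  exact ⟨q.bypass, q.bypass_isPath, by omega,
    (Set.eq_of_subset_of_ncard_le hsub (by omega) hW).symm⟩

lemma isPathGraph_augment (hU : ShortestPathSet G s t U) :
    IsPathGraph ((newG G s t).induce (augment U)) := by
  obtain ⟨p, hp, hlen, rfl⟩ := hU
  rw [← support_extendWalk]
  exact (isPath_extendWalk hp).isPathGraph_induce_support
    (isChordless_extendWalk (p.isChordless_of_length_eq_dist hlen)) (by simp [extendWalk])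

/-- An `inl s`–`inl t` path of `G'` cannot enter the pendant paths `s s_1 s_2` and
`t t_1 t_2`, so it comes from a walk of `G`. -/
lemma shortestPathSet_of_preconnected {W : Set V} (hs : s ∈ W) (ht : t ∈ W) (hW : W.Finite)
    (hcard : W.ncard ≤ G.dist s t + 1)
    (hconn : ((newG G s t).induce (augment W)).Preconnected) : ShortestPathSet G s t W := by
  classical
  obtain ⟨w⟩ := hconn ⟨inl s, by simp [augment, hs]⟩ ⟨inl t, by simp [augment, ht]⟩
  set P := (w.map (Embedding.induce (augment W)).toHom).bypass
  have hP : P.IsPath := Walk.bypass_isPath _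
  have hPW : ∀ x ∈ P.support, x ∈ augment W := fun x hx => by
    obtain ⟨y, -, rfl⟩ :=
      List.mem_map.mp (Walk.support_map _ _ ▸ Walk.support_bypass_subset_support _ hx)
    exact y.2
  have h1 : inr 1 ∉ P.support :=
    hP.notMem_support_of_forall_adj_eq (by simp) (by simp) fun _ _ h => newG_adj_inr_one.mp h
  have h0 : inr 0 ∉ P.support := hP.notMem_support_of_forall_adj_eq (by simp) (by simp)
    fun y hy h => (newG_adj_inr_zero.mp h).resolve_left (by rintro rfl; exact h1 hy)
  have h3 : inr 3 ∉ P.support :=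
    hP.notMem_support_of_forall_adj_eq (by simp) (by simp) fun _ _ h => newG_adj_inr_three.mp h
  have h2 : inr 2 ∉ P.support := hP.notMem_support_of_forall_adj_eq (by simp) (by simp)
    fun y hy h => (newG_adj_inr_two.mp h).resolve_left (by rintro rfl; exact h3 hy)
  have hrange : ∀ x ∈ P.support, x ∈ Set.range (inlEmbedding G s t) := by
    rintro (v | i) hx
    · exact ⟨v, rfl⟩
    · fin_cases i <;> contradiction
  obtain ⟨q, hq⟩ := P.exists_support_map_eq (inlEmbedding G s t) rfl rfl hrange
  refine shortestPathSet_of_walk hW hcard q fun x hx => ?_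
  have hxP : inl x ∈ P.support := hq ▸ List.mem_map_of_mem hx
  simpa [augment] using hPW _ hxP

lemma augment_diff_union (U : Set V) (u v : V) :
    augment (U \ {u} ∪ {v}) = augment U \ {inl u} ∪ {inl v} := by
  ext (x | i) <;> simp [augment]

lemma augment_injective : Function.Injective (augment : Set V → Set (Wt V)) :=
  fun U W h => Set.ext fun v => by simpa [augment] using Set.ext_iff.mp h (inl v)

lemma tjStepV_augment {W : Set V} (h : TJStepV U W) : TJStepV (augment U) (augment W) := by
  obtain ⟨u, v, hu, hv, rfl⟩ := h
  exact ⟨inl u, inl v, by simp [augment, hu], by simp [augment, hv], augment_diff_union U u v⟩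

/-- A token moved off an end `s_2` or `t_2` must land next to a vertex `w` of the path, which then
has three neighbours. -/
lemma not_isPathGraph_of_remove_end (hU : ShortestPathSet G s t U) {v : V} (hv : v ∉ U)
    {x : Wt V} (hx : x = inr 1 ∨ x = inr 3) :
    ¬ IsPathGraph ((newG G s t).induce (augment U \ {x} ∪ {inl v})) := by
  intro hB
  have hvB : inl v ∈ augment U \ {x} ∪ {inl v} := by simp
  obtain ⟨⟨z, hzB⟩, hvz⟩ := hB.exists_adj ⟨inl v, hvB⟩
  change (newG G s t).Adj (inl v) z at hvz
  obtain ⟨p, hp, -, rfl⟩ := hU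
  obtain ⟨w, rfl⟩ : ∃ w, z = inl w := by
    rcases z with w | i
    · exact ⟨w, rfl⟩
    · rcases newG_adj_inl_inr.mp hvz with ⟨rfl, -⟩ | ⟨rfl, -⟩
      exacts [(hv p.start_mem_support).elim, (hv p.end_mem_support).elim]
  have hw : inl w ∈ (extendWalk p).support := by
    have : inl w ∈ augment {v | v ∈ p.support} := by
      rcases hzB with ⟨h, -⟩ | h
      · exact h
      · exact absurd h.symm hvz.ne
    rwa [← support_extendWalk] at this
  have hnb : ∀ c ∈ (extendWalk p).support, (newG G s t).Adj (inl w) c →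
      c ∈ augment {v | v ∈ p.support} \ {x} ∪ {inl v} ∧ c ≠ inl v := by
    intro c hc hwc
    replace hc : c ∈ augment {v | v ∈ p.support} := support_extendWalk p ▸ hc
    refine ⟨Or.inl ⟨hc, ?_⟩, ?_⟩
    · rintro rfl
      rcases hx with rfl | rfl <;> simp at hwc
    · rintro rfl
      exact hv (by simpa [augment] using hc)
  obtain ⟨a, ha, b, hb, hab, hwa, hwb⟩ :=
    (isPath_extendWalk hp).exists_adj_adj_of_mem_support hw (by simp) (by simp)
  rcases hB.eq_or_eq_of_adj (x := ⟨inl w, hzB⟩) (a := ⟨a, (hnb a ha hwa).1⟩)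
    (b := ⟨b, (hnb b hb hwb).1⟩) (c := ⟨inl v, hvB⟩) hwa hwb (by simpa using hab) hvz.symm
    with h | h
  exacts [(hnb a ha hwa).2 (congrArg Subtype.val h).symm,
    (hnb b hb hwb).2 (congrArg Subtype.val h).symm]

/-- Removing `s_1` or `s` cuts `s_2` off from `t_2`, and symmetrically at the `t` end. -/
lemma exists_eq_inl_of_isPathGraph (hU : ShortestPathSet G s t U) {v : V} (hv : v ∉ U)
    {x : Wt V} (hx : x ∈ augment U)
    (hB : IsPathGraph ((newG G s t).induce (augment U \ {x} ∪ {inl v}))) :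
    ∃ u, x = inl u ∧ u ≠ s ∧ u ≠ t := by
  have hxB : x ∉ augment U \ {x} ∪ {inl v} := by
    rintro (⟨-, h⟩ | rfl)
    · exact h rfl
    · exact hv (by simpa [augment] using hx)
  have hinr : ∀ i, x ≠ inr i → inr i ∈ augment U \ {x} ∪ {inl v} := fun i hi =>
    Or.inl ⟨by simp [augment], hi.symm⟩
  have hs_side : ¬ (x = inr 0 ∨ x = inl s) := fun hx' =>
    not_preconnected_induce_of_pendant (z := inr 3) (fun _ => newG_adj_inr_one.mp)
      (fun _ => newG_adj_inr_zero.mp) (hx'.imp (· ▸ hxB) (· ▸ hxB))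
      (hinr 1 (by rcases hx' with rfl | rfl <;> simp))
      (hinr 3 (by rcases hx' with rfl | rfl <;> simp))
      (by simp) (by simp) hB.1.preconnected
  have ht_side : ¬ (x = inr 2 ∨ x = inl t) := fun hx' =>
    not_preconnected_induce_of_pendant (z := inr 1) (fun _ => newG_adj_inr_three.mp)
      (fun _ => newG_adj_inr_two.mp) (hx'.imp (· ▸ hxB) (· ▸ hxB))
      (hinr 3 (by rcases hx' with rfl | rfl <;> simp))
      (hinr 1 (by rcases hx' with rfl | rfl <;> simp))
      (by simp) (by simp) hB.1.preconnected
  have hends : ¬ (x = inr 1 ∨ x = inr 3) := fun hx' => not_isPathGraph_of_remove_end hU hv hx' hB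
  rcases x with u | i
  · exact ⟨u, rfl, by rintro rfl; simp at hs_side, by rintro rfl; simp at ht_side⟩
  · fin_cases i <;> simp at hs_side ht_side hends

lemma exists_tjStep_of_tjStep_augment (hU : ShortestPathSet G s t U) {B : Set (Wt V)}
    (hstep : TJStepV (augment U) B) (hB : IsPathGraph ((newG G s t).induce B)) :
    ∃ W, ShortestPathSet G s t W ∧ TJStepV U W ∧ augment W = B := by
  obtain ⟨x, y, hx, hy, rfl⟩ := hstep
  obtain ⟨v, rfl⟩ : ∃ v, y = inl v := by
    rcases y with v | i
    · exact ⟨v, rfl⟩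
    · simp [augment] at hy
  have hv : v ∉ U := by simpa [augment] using hy
  obtain ⟨u, rfl, hus, hut⟩ := exists_eq_inl_of_isPathGraph hU hv hx hB
  have hu : u ∈ U := by simpa [augment] using hx
  have hcard : (U \ {u} ∪ {v}).ncard = U.ncard := by
    have := (Set.ncard_pos hU.finite).mpr ⟨u, hu⟩
    rw [Set.union_singleton, Set.ncard_insert_of_notMem (fun h => hv h.1) (hU.finite.sdiff),
      Set.ncard_sdiff_singleton_of_mem hu]
    omega
  refine ⟨U \ {u} ∪ {v}, ?_, ⟨u, v, hu, hv, rfl⟩, augment_diff_union U u v⟩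
  refine shortestPathSet_of_preconnected (.inl ⟨hU.start_mem, hus.symm⟩)
    (.inl ⟨hU.end_mem, hut.symm⟩) ((hU.finite.sdiff).union (Set.finite_singleton v))
    (hcard.trans hU.ncard_eq).le ?_
  rw [augment_diff_union]
  exact hB.1.preconnected

end NewGraph

theorem stmt16_general (G : SimpleGraph V) (s t : V)
    (Vs Vt : Set V) (hVs : ShortestPathSet G s t Vs) :
    TJReachV (ShortestPathSet G s t) Vs Vt ↔
      TJReachV (fun U => IsPathGraph ((newG G s t).induce U))
        (Sum.inl '' Vs ∪ Set.range Sum.inr) (Sum.inl '' Vt ∪ Set.range Sum.inr) :=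
  ⟨TJReachV.map augment (fun _ => isPathGraph_augment) (fun _ _ => tjStepV_augment),
    TJReachV.of_map augment_injective (fun _ _ hU => exists_tjStep_of_tjStep_augment hU) hVs⟩

theorem stmt16 [Fintype V] [DecidableEq V] (G : SimpleGraph V) (s t : V) (hst : s ≠ t)
    (hreach : G.Reachable s t)
    (hall : ∀ v, OnShortest G s t v)
    (hlayer : ∀ u v, G.Adj u v → G.dist s u ≠ G.dist s v)
    (Vs Vt : Set V) (hVs : ShortestPathSet G s t Vs) (hVt : ShortestPathSet G s t Vt) :
    TJReachV (ShortestPathSet G s t) Vs Vt ↔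
      TJReachV (fun U => IsPathGraph ((newG G s t).induce U))
        (Sum.inl '' Vs ∪ Set.range Sum.inr) (Sum.inl '' Vt ∪ Set.range Sum.inr) :=
  stmt16_general G s t Vs Vt hVs

end Stmt16
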